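/- For every set X ⊆ ω₁ all of whose elements are greater than 6, there exists a simple pattern (su, sp) over ω₁ such that for every ζ with 6 < ζ < ω₁, the quadruple {3,5,6,ζ} belongs to su if and only if ζ ∈ X. (In particular, every quadruple appearing in the Suslin column of the simplicity table, together with all its nonempty subsets, can be placed in su while every tuple of the special column, together with all its supersets, is placed in sp: the two resulting families are disjoint.) -/

import Mathlib

noncomputable section

open Cardinal Set

/-- The first uncountable ordinal. -/
def omega1 : Ordinal.{0} := (Cardinal.aleph 1).ord

universe u v w

/-- A carrier together with a strict order relation and a level function. -/
structure PreTree (α : Type u) where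
  lt : α → α → Prop
  lev : α → Ordinal.{u_1}

namespace PreTree

variable {α : Type u}

/-- reflexive closure of the tree order -/
def le (T : PreTree α) (x y : α) : Prop := x = y ∨ T.lt x y

/-- tree axioms: the relation is transitive, the level function is strictly increasing,
the predecessors of any node are linearly ordered and there is exactly one predecessor
at each smaller level (so the predecessors are well-ordered of order type `lev x`). -/
def IsTree (T : PreTree α) : Prop :=
  (∀ x y z, T.lt x y → T.lt y z → T.lt x z) ∧
  (∀ x y, T.lt x y → T.lev x < T.lev y) ∧
  (∀ x y z, T.lt y x → T.lt z x → y = z ∨ T.lt y z ∨ T.lt z y) ∧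
  (∀ x o, o < T.lev x → ∃! y, T.lt y x ∧ T.lev y = o)

/-- an ω₁-tree: height ω₁, countable nonempty levels, each node has ℵ₀ many
immediate successors and extensions in every higher level below ω₁. -/
def IsOmega1Tree (T : PreTree α) : Prop :=
  T.IsTree ∧
  (∀ x, T.lev x < omega1) ∧
  (∀ o, o < omega1 → {x | T.lev x = o}.Countable) ∧
  (∀ o, o < omega1 → ∃ x, T.lev x = o) ∧
  (∀ x, {y | T.lt x y ∧ T.lev y = T.lev x + 1}.Infinite) ∧
  (∀ x o, T.lev x < o → o < omega1 → ∃ y, T.lt x y ∧ T.lev y = o)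

def IsAntichain' (T : PreTree α) (s : Set α) : Prop :=
  ∀ x ∈ s, ∀ y ∈ s, x ≠ y → ¬ T.lt x y ∧ ¬ T.lt y x

def IsChain' (T : PreTree α) (s : Set α) : Prop :=
  ∀ x ∈ s, ∀ y ∈ s, x = y ∨ T.lt x y ∨ T.lt y x

/-- a Suslin tree: an ω₁-tree with no uncountable antichain -/
def Suslin (T : PreTree α) : Prop :=
  T.IsOmega1Tree ∧ ∀ s : Set α, T.IsAntichain' s → s.Countable

/-- an Aronszajn tree: an ω₁-tree with no uncountable chain -/
def Aronszajn (T : PreTree α) : Prop :=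
  T.IsOmega1Tree ∧ ∀ s : Set α, T.IsChain' s → s.Countable

/-- a special tree: there is an order preserving map into ℚ -/
def Special (T : PreTree α) : Prop :=
  ∃ f : α → ℚ, ∀ x y, T.lt x y → f x < f y

end PreTree

/-- the carrier of the product of a family of trees: tuples of nodes of a common level -/
abbrev ProdCarrier {ι : Type u} {β : ι → Type v} (A : ∀ i, PreTree (β i)) : Type (max u v) :=
  {f : ∀ i, β i // ∃ o, ∀ i, (A i).lev (f i) = o}

/-- the product of a family of trees, ordered coordinatewise -/
def prodTree {ι : Type u} {β : ι → Type v} (A : ∀ i, PreTree (β i)) :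
    PreTree (ProdCarrier A) where
  lt f g := ∀ i, (A i).lt (f.1 i) (g.1 i)
  lev f := ⨆ i, (A i).lev (f.1 i)

/-- the carrier of the product of two trees -/
abbrev ProdCarrier₂ {α : Type u} {β : Type v} (A : PreTree α) (B : PreTree β) : Type (max u v) :=
  {p : α × β // A.lev p.1 = B.lev p.2}

/-- the product of two trees -/
def prodTree₂ {α : Type u} {β : Type v} (A : PreTree α) (B : PreTree β) :
    PreTree (ProdCarrier₂ A B) where
  lt p q := A.lt p.1.1 q.1.1 ∧ B.lt p.1.2 q.1.2
  lev p := A.lev p.1.1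

abbrev ConeCarrier {α : Type u} (T : PreTree α) (a : α) : Type u := {x : α // x = a ∨ T.lt a x}

/-- the subtree `T_a` of all extensions of `a`, with levels shifted to start at `0` -/
def cone {α : Type u} (T : PreTree α) (a : α) : PreTree (ConeCarrier T a) where
  lt x y := T.lt x.1 y.1
  lev x := T.lev x.1 - T.lev a

/-- the derived tree determined by a tuple of (distinct, same-level) nodes:
the product of the cones above the nodes -/
def derivedTree {α : Type u} (T : PreTree α) {n : ℕ} (a : Fin (n+1) → α) :
    PreTree (ProdCarrier (fun i => cone T (a i))) :=
  prodTree (fun i => cone T (a i))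

/-- every derived tree of `T` is a Suslin tree -/
def AllDerivedSuslin {α : Type u} (T : PreTree α) : Prop :=
  ∀ (n : ℕ) (a : Fin (n+1) → α), Function.Injective a →
    (∀ i, T.lev (a i) = T.lev (a 0)) → (derivedTree T a).Suslin

/-- carrier of the disjoint union of the trees with indices in the finite set `d` -/
abbrev UnionCarrier {I : Type u} (β : I → Type v) (d : Finset I) : Type (max u v) :=
  {p : Sigma β // p.1 ∈ d}

/-- the disjoint union of the trees with indices in `d` -/
def unionTree {I : Type u} {β : I → Type v} (A : ∀ ζ, PreTree (β ζ)) (d : Finset I) :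
    PreTree (UnionCarrier β d) where
  lt x y := ∃ h : x.1.1 = y.1.1, (A y.1.1).lt (cast (congrArg β h) x.1.2) y.1.2
  lev x := (A x.1.1).lev x.1.2

/-! clubs, stationary sets and the diamond principle on ω₁ -/

/-- `C` is a closed unbounded subset of ω₁ -/
def IsClubO1 (C : Set Ordinal) : Prop :=
  (∀ c ∈ C, c < omega1) ∧
  (∀ o, o < omega1 → ∃ c ∈ C, o ≤ c) ∧
  (∀ o, o < omega1 → o ≠ 0 → (∀ b, o ≠ b + 1) →
    (∀ b, b < o → ∃ c ∈ C, b ≤ c ∧ c < o) → o ∈ C)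

/-- `S` is stationary in ω₁ -/
def StationaryO1 (S : Set Ordinal) : Prop :=
  ∀ C, IsClubO1 C → (S ∩ C).Nonempty

/-- the diamond principle ◇ on ω₁ -/
def DiamondO1 : Prop :=
  ∃ S : Ordinal → Set Ordinal,
    (∀ ξ, S ξ ⊆ Set.Iio ξ) ∧
    ∀ X : Set Ordinal, X ⊆ Set.Iio omega1 →
      StationaryO1 {ξ | ξ < omega1 ∧ X ∩ Set.Iio ξ = S ξ}

/-! ω₁-like orders, parity, patterns -/

/-- `j` is the immediate successor of `i` -/
def ISucc {I : Type u} [LinearOrder I] (i j : I) : Prop :=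
  i < j ∧ ∀ k, i < k → j ≤ k

/-- `j` is the `n`-th iterated immediate successor of `i` -/
def IterSucc {I : Type u} [LinearOrder I] : ℕ → I → I → Prop
  | 0, i, j => i = j
  | n+1, i, j => ∃ k, IterSucc n i k ∧ ISucc k j

/-- `i` is a limit point: not an immediate successor (least elements count as limits) -/
def ILimit {I : Type u} [LinearOrder I] (i : I) : Prop := ¬ ∃ j, ISucc j i

/-- `i` is even: of the form `δ + n` with `δ` a limit and `n` even -/
def IEven {I : Type u} [LinearOrder I] (i : I) : Prop :=
  ∃ (δ : I) (n : ℕ), ILimit δ ∧ Even n ∧ IterSucc n δ i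

/-- `i` is odd: of the form `δ + n` with `δ` a limit and `n` odd -/
def IOdd {I : Type u} [LinearOrder I] (i : I) : Prop :=
  ∃ (δ : I) (n : ℕ), ILimit δ ∧ Odd n ∧ IterSucc n δ i

/-- an ω₁-like order: uncountable, proper initial segments countable,
with a least element, and every element has an immediate successor -/
def IsOmega1Like (I : Type u) [LinearOrder I] : Prop :=
  ¬ (Set.univ : Set I).Countable ∧
  (∀ i : I, {j | j < i}.Countable) ∧
  (∃ b : I, ∀ i, b ≤ i) ∧
  (∀ i : I, ∃ j, ISucc i j)

/-- the initial segment below `δ` is well-ordered, of order type `ot` -/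
def SegType {I : Type u} [LinearOrder I] (δ : I) (ot : Ordinal.{0}) : Prop :=
  ∃ h : IsWellOrder {j : I // j < δ} (fun a b => a < b),
    @Ordinal.type {j : I // j < δ} (fun a b => a < b) h = Ordinal.lift.{u, 0} ot

open Classical in
/-- the finite set `{a, b, c, d}` -/
def quadF {I : Type u} (a b c d : I) : Finset I := {a, b, c, d}

/-- a pattern over `I`: `sp` consists of nonempty finite subsets of `I` closed under
supersets, and `su` is its complement among the nonempty finite subsets -/
def IsPatternI {I : Type u} (su sp : Set (Finset I)) : Prop :=
  (∀ e ∈ sp, e.Nonempty) ∧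
  (∀ e ∈ sp, ∀ e' : Finset I, e ⊆ e' → e' ∈ sp) ∧
  su = {e | e.Nonempty ∧ e ∉ sp}

/-- `E` assigns to each countable limit ordinal `δ ≠ 0` a canonical code `E δ ⊆ ω`
of a well-order of ω of order type `δ` -/
def GoodCodes (E : Ordinal → Set ℕ) : Prop :=
  E 0 = ∅ ∧
  ∀ δ : Ordinal, δ < omega1 → δ ≠ 0 → (∀ b, δ ≠ b + 1) →
    ∃ (r : ℕ → ℕ → Prop) (h : IsWellOrder ℕ r),
      @Ordinal.type ℕ r h = δ ∧ E δ = {m | ∃ a b, r a b ∧ m = Nat.pair a b}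

/-- a simple pattern: the pattern respects the "simplicity table" -/
def IsSimplePatternI (I : Type u) [LinearOrder I] (E : Ordinal → Set ℕ)
    (su sp : Set (Finset I)) : Prop :=
  IsPatternI su sp ∧
  -- Suslin column: all triples, pairs and singletons
  (∀ e : Finset I, e.Nonempty → e.card ≤ 3 → e ∈ su) ∧
  -- Suslin column: quadruples
  (∀ ζ₁ ζ₂ ζ₃ ζ₄ : I, ζ₁ < ζ₂ → ζ₂ < ζ₃ → ζ₃ < ζ₄ →
    ((IEven ζ₁ ∧ IEven ζ₂ ∧ IEven ζ₃ ∧ IEven ζ₄) ∨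
     (IOdd ζ₁ ∧ IOdd ζ₂ ∧ IOdd ζ₃ ∧ IOdd ζ₄) ∨
     (IOdd ζ₁ ∧ IEven ζ₂ ∧ IOdd ζ₃ ∧ IEven ζ₄) ∨
     (IOdd ζ₁ ∧ IEven ζ₂ ∧ IEven ζ₃ ∧ IOdd ζ₄) ∨
     (ILimit ζ₁ ∧ IEven ζ₂ ∧ IOdd ζ₃ ∧ IOdd ζ₄) ∨
     (ISucc ζ₁ ζ₂ ∧ IOdd ζ₃ ∧ IOdd ζ₄)) →
    quadF ζ₁ ζ₂ ζ₃ ζ₄ ∈ su) ∧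
  (∀ (δ : I) (ot : Ordinal) (i : ℕ) (x1 x3 x4 xi : I),
    ILimit δ → SegType δ ot →
    IterSucc 1 δ x1 → IterSucc 3 δ x3 → IterSucc 4 δ x4 → IterSucc (5+i) δ xi →
    i ∈ E ot → quadF x1 x3 x4 xi ∈ su) ∧
  -- special column: all quintuples (and larger sets)
  (∀ e : Finset I, 5 ≤ e.card → e ∈ sp) ∧
  -- special column: quadruples
  (∀ ζ₁ ζ₂ ζ₃ ζ₄ : I, ζ₁ < ζ₂ → ζ₂ < ζ₃ → ζ₃ < ζ₄ →
    ((IEven ζ₁ ∧ IOdd ζ₂ ∧ IEven ζ₃ ∧ IOdd ζ₄) ∨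
     (IOdd ζ₁ ∧ IEven ζ₂ ∧ IEven ζ₃ ∧ IEven ζ₄) ∨
     (IEven ζ₁ ∧ ¬ ILimit ζ₁ ∧ IEven ζ₂ ∧ IOdd ζ₃ ∧ IOdd ζ₄) ∨
     (((IEven ζ₁ ∧ IOdd ζ₂) ∨ (IOdd ζ₁ ∧ IEven ζ₂)) ∧ ¬ ISucc ζ₁ ζ₂ ∧ IOdd ζ₃ ∧ IOdd ζ₄)) →
    quadF ζ₁ ζ₂ ζ₃ ζ₄ ∈ sp) ∧
  (∀ (δ : I) (ot : Ordinal) (i : ℕ) (x1 x3 x4 xi : I),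
    ILimit δ → SegType δ ot →
    IterSucc 1 δ x1 → IterSucc 3 δ x3 → IterSucc 4 δ x4 → IterSucc (5+i) δ xi →
    i ∉ E ot → quadF x1 x3 x4 xi ∈ sp)

/-- the ordinals below ω₁, as a linear order -/
abbrev O1 : Type 1 := {o : Ordinal // o < omega1}

theorem nat_lt_omega1 (n : ℕ) : (n : Ordinal) < omega1 := by
  have h1 : (n : Ordinal) < Ordinal.omega0 := Ordinal.nat_lt_omega0 n
  have h2 : Ordinal.omega0 ≤ omega1 := by
    rw [← Cardinal.ord_aleph0]
    exact Cardinal.ord_le_ord.mpr (Cardinal.aleph0_le_aleph 1)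
  exact h1.trans_le h2

/-- the natural number `n` as an element of `O1` -/
def o1 (n : ℕ) : O1 := ⟨(n : Ordinal), nat_lt_omega1 n⟩

/-- the sequence of trees realizes the pattern `(su, sp)`: for `d ∈ su` the disjoint
union `T^d` and all of its derived trees are Suslin, and for `d ∈ sp` the full
product `T^(d)` is special -/
def HasPattern {I : Type u} {β : I → Type v} (A : ∀ ζ, PreTree (β ζ))
    (su sp : Set (Finset I)) : Prop :=
  (∀ d ∈ su, (unionTree A d).Suslin ∧ AllDerivedSuslin (unionTree A d)) ∧
  (∀ d ∈ sp, (prodTree (fun ζ : {x // x ∈ d} => A ζ.1)).Special)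

/-- a club-embedding of `A` into `B`: a level-preserving order-embedding defined on
the restriction of `A` to a club set of levels -/
def ClubEmbeds {α : Type u} {β : Type v} (A : PreTree α) (B : PreTree β) : Prop :=
  ∃ C : Set Ordinal, IsClubO1 C ∧
    ∃ h : {x : α // A.lev x ∈ C} → β,
      Function.Injective h ∧
      (∀ x, B.lev (h x) = A.lev x.1) ∧
      (∀ x y, A.lt x.1 y.1 ↔ B.lt (h x) (h y))

/-- the collection `{T^d : d ∈ su}` is primal: every derived tree of every member is
Suslin, and every Suslin tree contains a club-embedded copy of a derived tree of a member -/
def Primal {I : Type u} {β : I → Type v} (A : ∀ ζ, PreTree (β ζ)) (su : Set (Finset I)) : Prop :=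
  (∀ d ∈ su, (unionTree A d).Suslin ∧ AllDerivedSuslin (unionTree A d)) ∧
  ∀ (γ : Type w) (S : PreTree γ), S.Suslin →
    ∃ d ∈ su, ∃ (n : ℕ) (a : Fin (n+1) → UnionCarrier β d),
      Function.Injective a ∧
      (∀ i, (unionTree A d).lev (a i) = (unionTree A d).lev (a 0)) ∧
      ClubEmbeds (derivedTree (unionTree A d) a) S

/-! the specializing poset S(T) -/

/-- domain of a partial function into ℚ -/
def pdom {α : Type u} (h : α → Option ℚ) : Set α := {x | h x ≠ none}

/-- the finite function `h` (living on level ≥ a) bounds the approximation `f`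
(with `last f = a`): on each point of its domain it is strictly above the value of `f`
at the unique level-`a` restriction of the point -/
def Bounds {α : Type u} (T : PreTree α) (a : Ordinal) (f h : α → Option ℚ) : Prop :=
  ∀ x q, h x = some q → ∃ y r, T.le y x ∧ T.lev y = a ∧ f y = some r ∧ r < q

/-- a requirement of height `γ` and arity `n` -/
def IsRequirement {α : Type u} (T : PreTree α) (γ : Ordinal) (n : ℕ)
    (H : Set (α → Option ℚ)) : Prop :=
  ∀ h ∈ H, (pdom h).Finite ∧ (pdom h).ncard = n ∧ ∀ x ∈ pdom h, T.lev x = γ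

/-- the requirement `H` of height `γ` is dispersed -/
def DispersedReq {α : Type u} (T : PreTree α) (γ : Ordinal) (H : Set (α → Option ℚ)) : Prop :=
  ∀ t : Set α, t.Finite → t ⊆ {x | T.lev x = γ} → ∃ h ∈ H, ∀ x ∈ t, h x = none

/-- `h'` is the restriction `h↾γ` of the finite function `h` to level `γ`:
`h'(x↾γ) = h(x)` -/
def IsRestrictTo {α : Type u} (T : PreTree α) (γ : Ordinal) (h h' : α → Option ℚ) : Prop :=
  (∀ y, h' y ≠ none ↔ (T.lev y = γ ∧ ∃ x, T.le y x ∧ h x ≠ none)) ∧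
  (∀ y x, T.lev y = γ → T.le y x → h x ≠ none → h' y = h x)

/-- the approximation `f` (with `last f = a`) fulfills the requirement `H` of height `a` -/
def FulfillsReq {α : Type u} (T : PreTree α) (a : Ordinal) (f : α → Option ℚ)
    (H : Set (α → Option ℚ)) : Prop :=
  ∀ t : Set α, t.Finite → t ⊆ {x | T.lev x = a} →
    ∃ h ∈ H, Bounds T a f h ∧ ∀ x ∈ t, h x = none

/-- an approximation: a partial specializing function defined exactly on the nodes of
level ≤ a -/
def IsApprox {α : Type u} (T : PreTree α) (a : Ordinal) (f : α → Option ℚ) : Prop :=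
  a < omega1 ∧
  (∀ x, f x ≠ none ↔ T.lev x ≤ a) ∧
  (∀ x y qx qy, T.lt x y → f x = some qx → f y = some qy → qx < qy)

/-- a promise with base `b`: countable nonempty coherent sets of dispersed requirements,
one for each level `γ` with `b ≤ γ < ω₁`, all of one fixed arity -/
def IsPromise {α : Type u} (T : PreTree α) (b : Ordinal)
    (Γ : Ordinal → Set (Set (α → Option ℚ))) : Prop :=
  b < omega1 ∧
  (∃ n : ℕ, ∀ γ, b ≤ γ → γ < omega1 → ∀ H ∈ Γ γ, IsRequirement T γ n H) ∧
  (∀ γ, b ≤ γ → γ < omega1 →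
    (Γ γ).Countable ∧ (Γ γ).Nonempty ∧ ∀ H ∈ Γ γ, DispersedReq T γ H) ∧
  (∀ γ₀ γ₁, b ≤ γ₀ → γ₀ < γ₁ → γ₁ < omega1 →
    Γ γ₀ = {H' | ∃ H ∈ Γ γ₁, H' = {h' | ∃ h ∈ H, IsRestrictTo T γ₀ h h'}})

/-- a condition of the specializing poset `S(T)`: an approximation together with a
promise which it fulfills -/
structure SCond {α : Type u} (T : PreTree α) where
  last : Ordinal
  f : α → Option ℚ
  base : Ordinal
  Γ : Ordinal → Set (Set (α → Option ℚ))
  approx : IsApprox T last f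
  promise : IsPromise T base Γ
  base_le : base ≤ last
  fulfills : ∀ H ∈ Γ last, FulfillsReq T last f H

/-- `q` extends `p` in `S(T)` -/
def SExtends {α : Type u} {T : PreTree α} (q p : SCond T) : Prop :=
  p.last ≤ q.last ∧
  (∀ x, p.f x ≠ none → q.f x = p.f x) ∧
  ∀ γ, q.last ≤ γ → γ < omega1 → p.Γ γ ⊆ q.Γ γ

/-! the naive specializing poset S₂(T) -/

/-- a condition of the poset `S₂(T)` -/
def IsS2Cond {α : Type u} (T : PreTree α) (a : Ordinal) (f : α → Option ℚ) : Prop :=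
  IsApprox T a f ∧
  ∀ a₀, a₀ < a → ∀ (n : ℕ) (x : Fin (n+1) → α) (q : Fin (n+1) → ℚ),
    (∀ i, T.lev (x i) = a₀) →
    (∀ i, ∃ r, f (x i) = some r ∧ r < q i) →
    ∃ y : Fin (n+1) → α, ∀ i, T.lt (x i) (y i) ∧ T.lev (y i) = a ∧ f (y i) = some (q i)

/-- the disjoint union of two trees -/
def sumTree {α : Type u} {β : Type v} (A : PreTree α) (B : PreTree β) : PreTree (α ⊕ β) where
  lt x y :=
    match x, y with
    | Sum.inl a, Sum.inl b => A.lt a b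
    | Sum.inr a, Sum.inr b => B.lt a b
    | _, _ => False
  lev := Sum.elim A.lev B.lev

/-!
Take for `sp` all sets with at least five elements together with the quadruples of the
special column, the quadruples `⟨δ+1, δ+3, δ+4, δ+(5+i)⟩` with `i ∉ E_δ` (the
`E`-quadruples), and the quadruples `{3,5,6,ζ}` with `ζ ∉ X`. Any proper superset of a
quadruple has at least five elements, so `sp` is upward closed and a quadruple lies in `su`
exactly when it is not one of those put into `sp`. It remains to see that no
quadruple is demanded by both columns. Writing every element uniquely as `δ + n` with `δ` a
limit, parity is well defined, which separates the parity clauses of the two columns. The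
`E`-quadruples and the quadruples `{3,5,6,ζ}` have parity type `⟨odd, odd, even, ·⟩`, which
occurs in neither column; an `E`-quadruple determines `δ` and `i`, and `3` is not of the form
`δ + 1` with `δ` a limit.
-/

section Parity

variable {I : Type u} [LinearOrder I] {a b x y δ δ' : I} {m n : ℕ}

theorem ISucc.left_unique (ha : ISucc a x) (hb : ISucc b x) : a = b := by
  by_contra hne
  rcases lt_or_gt_of_ne hne with hab | hba
  · exact (ha.2 b hab).not_gt hb.1
  · exact (hb.2 a hba).not_gt ha.1

theorem ISucc.right_unique (hx : ISucc a x) (hy : ISucc a y) : x = y :=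
  le_antisymm (hx.2 y hy.1) (hy.2 x hx.1)

theorem IterSucc.right_unique (hx : IterSucc n δ x) (hy : IterSucc n δ y) : x = y := by
  induction n generalizing x y with
  | zero => exact hx.symm.trans hy
  | succ n ih =>
    obtain ⟨k, hk, hkx⟩ := hx
    obtain ⟨k', hk', hky⟩ := hy
    obtain rfl := ih hk hk'
    exact hkx.right_unique hky

theorem IterSucc.lt_of_lt (hx : IterSucc m δ x) (hy : IterSucc n δ y) (hmn : m < n) :
    x < y := by
  induction n generalizing y with
  | zero => omega
  | succ n ih =>
    obtain ⟨k, hk, hky⟩ := hy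
    rcases Nat.lt_succ_iff_lt_or_eq.mp hmn with hlt | rfl
    · exact (ih hk hlt).trans hky.1
    · exact hx.right_unique hk ▸ hky.1

theorem IterSucc.unique_of_iLimit (hδ : ILimit δ) (hδ' : ILimit δ') (h : IterSucc m δ x)
    (h' : IterSucc n δ' x) : δ = δ' ∧ m = n := by
  induction m generalizing n x with
  | zero =>
    cases n with
    | zero => exact ⟨h.trans h'.symm, rfl⟩
    | succ n =>
      obtain ⟨k, -, hk⟩ := h'
      exact absurd ⟨k, h ▸ hk⟩ hδ
  | succ m ih =>
    obtain ⟨k, hk, hkx⟩ := h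
    cases n with
    | zero => exact absurd ⟨k, h' ▸ hkx⟩ hδ'
    | succ n =>
      obtain ⟨k', hk', hk'x⟩ := h'
      obtain rfl := hkx.left_unique hk'x
      obtain ⟨rfl, rfl⟩ := ih hk hk'
      exact ⟨rfl, rfl⟩

theorem IEven.not_iOdd (he : IEven x) : ¬ IOdd x := by
  rintro ⟨δ', n', hδ', hn', h'⟩
  obtain ⟨δ, n, hδ, hn, h⟩ := he
  obtain ⟨-, rfl⟩ := h.unique_of_iLimit hδ hδ' h'
  exact Nat.not_odd_iff_even.mpr hn hn'

theorem ILimit.iEven (h : ILimit x) : IEven x :=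
  ⟨x, 0, h, Even.zero, rfl⟩

theorem ISucc.iOdd_of_iEven (h : ISucc x y) (hx : IEven x) : IOdd y := by
  obtain ⟨δ, n, hδ, hn, hδx⟩ := hx
  exact ⟨δ, n + 1, hδ, hn.add_one, x, hδx, h⟩

theorem iLimit_of_isMin (h : IsMin x) : ILimit x := by
  rintro ⟨y, hy⟩
  exact hy.1.not_ge (h hy.1.le)

end Parity

section Quadruples

theorem quadF_eq_insert {I : Type u} [DecidableEq I] (a b c d : I) :
    quadF a b c d = insert a (insert b (insert c {d})) := by
  ext; simp [quadF]

variable {I : Type u} [LinearOrder I]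

theorem Finset.insert_eq_insert_of_forall_lt [DecidableEq I] {a a' : I} {s s' : Finset I}
    (hs : ∀ x ∈ s, a < x) (hs' : ∀ x ∈ s', a' < x) (h : insert a s = insert a' s') :
    a = a' ∧ s = s' := by
  have ha' := Finset.mem_insert.mp (h.symm ▸ Finset.mem_insert_self a' s')
  have ha := Finset.mem_insert.mp (h ▸ Finset.mem_insert_self a s)
  obtain rfl : a = a' :=
    le_antisymm (ha'.elim (·.ge) (hs a' · |>.le)) (ha.elim (·.ge) (hs' a · |>.le))
  refine ⟨rfl, ?_⟩
  rw [← Finset.erase_insert (fun h => lt_irrefl a (hs a h)), h,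
    Finset.erase_insert (fun h => lt_irrefl a (hs' a h))]

theorem quadF_nonempty {a b c d : I} : (quadF a b c d).Nonempty := by
  classical
  rw [quadF_eq_insert]
  exact Finset.insert_nonempty _ _

theorem card_quadF {a b c d : I} (hab : a < b) (hbc : b < c) (hcd : c < d) :
    (quadF a b c d).card = 4 := by
  classical
  rw [quadF_eq_insert, Finset.card_insert_of_notMem, Finset.card_insert_of_notMem,
    Finset.card_pair hcd.ne]
  · simp [hbc.ne, (hbc.trans hcd).ne]
  · simp [hab.ne, (hab.trans hbc).ne, (hab.trans (hbc.trans hcd)).ne]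

theorem quadF_inj {a b c d a' b' c' d' : I} (hab : a < b) (hbc : b < c) (hcd : c < d)
    (hab' : a' < b') (hbc' : b' < c') (hcd' : c' < d')
    (h : quadF a b c d = quadF a' b' c' d') : a = a' ∧ b = b' ∧ c = c' ∧ d = d' := by
  classical
  rw [quadF_eq_insert, quadF_eq_insert] at h
  obtain ⟨rfl, h₁⟩ := Finset.insert_eq_insert_of_forall_lt
    (by simp [hab, hab.trans hbc, hab.trans (hbc.trans hcd)])
    (by simp [hab', hab'.trans hbc', hab'.trans (hbc'.trans hcd')]) h
  obtain ⟨rfl, h₂⟩ := Finset.insert_eq_insert_of_forall_lt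
    (by simp [hbc, hbc.trans hcd]) (by simp [hbc', hbc'.trans hcd']) h₁
  obtain ⟨rfl, h₃⟩ := Finset.insert_eq_insert_of_forall_lt (by simp [hcd]) (by simp [hcd']) h₂
  exact ⟨rfl, rfl, rfl, Finset.singleton_inj.mp h₃⟩

def spOfQuads (P : I → I → I → I → Prop) : Set (Finset I) :=
  {e | 5 ≤ e.card ∨ ∃ a b c d, a < b ∧ b < c ∧ c < d ∧ P a b c d ∧ e = quadF a b c d}

variable {P : I → I → I → I → Prop}

theorem four_le_card_of_mem_spOfQuads {e : Finset I} (he : e ∈ spOfQuads P) :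
    4 ≤ e.card := by
  rcases he with h | ⟨a, b, c, d, hab, hbc, hcd, -, rfl⟩
  · omega
  · exact (card_quadF hab hbc hcd).ge

theorem isPatternI_spOfQuads :
    IsPatternI {e | e.Nonempty ∧ e ∉ spOfQuads P} (spOfQuads P) := by
  refine ⟨fun e he => Finset.card_pos.mp ?_, fun e he e' hee' => ?_, rfl⟩
  · have := four_le_card_of_mem_spOfQuads he
    omega
  · rcases eq_or_ne e e' with rfl | hne
    · exact he
    · have := Finset.card_lt_card (Finset.ssubset_iff_subset_ne.mpr ⟨hee', hne⟩)
      have := four_le_card_of_mem_spOfQuads he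
      exact Or.inl (by omega)

theorem quadF_mem_spOfQuads_iff {a b c d : I} (hab : a < b) (hbc : b < c)
    (hcd : c < d) : quadF a b c d ∈ spOfQuads P ↔ P a b c d := by
  refine ⟨fun h => ?_, fun h => Or.inr ⟨a, b, c, d, hab, hbc, hcd, h, rfl⟩⟩
  rcases h with h | ⟨a', b', c', d', hab', hbc', hcd', hP, he⟩
  · rw [card_quadF hab hbc hcd] at h
    omega
  · obtain ⟨rfl, rfl, rfl, rfl⟩ := quadF_inj hab hbc hcd hab' hbc' hcd' he
    exact hP

end Quadruples

section SimplicityTable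

variable {I : Type u} [LinearOrder I]

def SuslinColumnQuad (ζ₁ ζ₂ ζ₃ ζ₄ : I) : Prop :=
  (IEven ζ₁ ∧ IEven ζ₂ ∧ IEven ζ₃ ∧ IEven ζ₄) ∨
  (IOdd ζ₁ ∧ IOdd ζ₂ ∧ IOdd ζ₃ ∧ IOdd ζ₄) ∨
  (IOdd ζ₁ ∧ IEven ζ₂ ∧ IOdd ζ₃ ∧ IEven ζ₄) ∨
  (IOdd ζ₁ ∧ IEven ζ₂ ∧ IEven ζ₃ ∧ IOdd ζ₄) ∨
  (ILimit ζ₁ ∧ IEven ζ₂ ∧ IOdd ζ₃ ∧ IOdd ζ₄) ∨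
  (ISucc ζ₁ ζ₂ ∧ IOdd ζ₃ ∧ IOdd ζ₄)

def SpecialColumnQuad (ζ₁ ζ₂ ζ₃ ζ₄ : I) : Prop :=
  (IEven ζ₁ ∧ IOdd ζ₂ ∧ IEven ζ₃ ∧ IOdd ζ₄) ∨
  (IOdd ζ₁ ∧ IEven ζ₂ ∧ IEven ζ₃ ∧ IEven ζ₄) ∨
  (IEven ζ₁ ∧ ¬ ILimit ζ₁ ∧ IEven ζ₂ ∧ IOdd ζ₃ ∧ IOdd ζ₄) ∨
  (((IEven ζ₁ ∧ IOdd ζ₂) ∨ (IOdd ζ₁ ∧ IEven ζ₂)) ∧ ¬ ISucc ζ₁ ζ₂ ∧ IOdd ζ₃ ∧ IOdd ζ₄)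

def IsCodeQuad (δ : I) (i : ℕ) (x₁ x₃ x₄ xᵢ : I) : Prop :=
  ILimit δ ∧ IterSucc 1 δ x₁ ∧ IterSucc 3 δ x₃ ∧ IterSucc 4 δ x₄ ∧ IterSucc (5 + i) δ xᵢ

variable {a b c d δ δ' : I} {i i' : ℕ}

theorem SegType.unique {ot ot' : Ordinal} (h : SegType δ ot) (h' : SegType δ ot') :
    ot = ot' := by
  obtain ⟨_, e⟩ := h
  obtain ⟨_, e'⟩ := h'
  exact Ordinal.lift_inj.mp (e.symm.trans e')

theorem SuslinColumnQuad.not_specialColumnQuad (hsu : SuslinColumnQuad a b c d) :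
    ¬ SpecialColumnQuad a b c d := by
  rcases hsu with ⟨a1, a2, a3, a4⟩ | ⟨a1, a2, a3, a4⟩ | ⟨a1, a2, a3, a4⟩ | ⟨a1, a2, a3, a4⟩ |
      ⟨a1, a2, a3, a4⟩ | ⟨a12, a3, a4⟩ <;>
    rintro (⟨b1, b2, b3, b4⟩ | ⟨b1, b2, b3, b4⟩ | ⟨b1, b1', b2, b3, b4⟩ |
      ⟨⟨b1, b2⟩ | ⟨b1, b2⟩, b12, b3, b4⟩)
  all_goals first
    | exact a1.not_iOdd b1 | exact b1.not_iOdd a1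
    | exact a2.not_iOdd b2 | exact b2.not_iOdd a2
    | exact a3.not_iOdd b3 | exact b3.not_iOdd a3
    | exact a4.not_iOdd b4 | exact b4.not_iOdd a4
    | exact a1.iEven.not_iOdd b1
    | exact b2.not_iOdd (a12.iOdd_of_iEven b1)
    | exact b1' a1
    | exact b12 a12

theorem not_suslinColumnQuad_of_iOdd_iOdd_iEven (ha : IOdd a) (hb : IOdd b) (hc : IEven c) :
    ¬ SuslinColumnQuad a b c d := by
  rintro (⟨ha', -⟩ | ⟨-, -, hc', -⟩ | ⟨-, hb', -⟩ | ⟨-, hb', -⟩ | ⟨ha', -⟩ | ⟨-, hc', -⟩)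
  · exact ha'.not_iOdd ha
  · exact hc.not_iOdd hc'
  · exact hb'.not_iOdd hb
  · exact hb'.not_iOdd hb
  · exact ha'.iEven.not_iOdd ha
  · exact hc.not_iOdd hc'

theorem not_specialColumnQuad_of_iOdd_iOdd (ha : IOdd a) (hb : IOdd b) :
    ¬ SpecialColumnQuad a b c d := by
  rintro (⟨ha', -⟩ | ⟨-, hb', -⟩ | ⟨ha', -⟩ | ⟨⟨ha', -⟩ | ⟨-, hb'⟩, -⟩)
  · exact ha'.not_iOdd ha
  · exact hb'.not_iOdd hb
  · exact ha'.not_iOdd ha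
  · exact ha'.not_iOdd ha
  · exact hb'.not_iOdd hb

theorem IsCodeQuad.iOdd_iOdd_iEven (h : IsCodeQuad δ i a b c d) :
    IOdd a ∧ IOdd b ∧ IEven c :=
  ⟨⟨δ, 1, h.1, odd_one, h.2.1⟩, ⟨δ, 3, h.1, by decide, h.2.2.1⟩,
    ⟨δ, 4, h.1, by decide, h.2.2.2.1⟩⟩

theorem IsCodeQuad.lt (h : IsCodeQuad δ i a b c d) : a < b ∧ b < c ∧ c < d :=
  let ⟨_, h₁, h₃, h₄, hᵢ⟩ := h
  ⟨h₁.lt_of_lt h₃ (by omega), h₃.lt_of_lt h₄ (by omega), h₄.lt_of_lt hᵢ (by omega)⟩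

theorem IsCodeQuad.unique {b' c' : I} (h : IsCodeQuad δ i a b c d)
    (h' : IsCodeQuad δ' i' a b' c' d) : δ = δ' ∧ i = i' := by
  obtain ⟨rfl, -⟩ := IterSucc.unique_of_iLimit h.1 h'.1 h.2.1 h'.2.1
  obtain ⟨-, hi⟩ := IterSucc.unique_of_iLimit h.1 h'.1 h.2.2.2.2 h'.2.2.2.2
  exact ⟨rfl, by omega⟩

theorem isSimplePatternI_spOfQuads {E : Ordinal → Set ℕ} {P : I → I → I → I → Prop}
    (hsu : ∀ a b c d, SuslinColumnQuad a b c d → ¬ P a b c d)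
    (hsu_code : ∀ δ ot i a b c d, SegType δ ot → IsCodeQuad δ i a b c d → i ∈ E ot →
      ¬ P a b c d)
    (hsp : ∀ a b c d, SpecialColumnQuad a b c d → P a b c d)
    (hsp_code : ∀ δ ot i a b c d, SegType δ ot → IsCodeQuad δ i a b c d → i ∉ E ot →
      P a b c d) :
    IsSimplePatternI I E {e | e.Nonempty ∧ e ∉ spOfQuads P} (spOfQuads P) := by
  refine ⟨isPatternI_spOfQuads, fun e he hcard => ⟨he, fun hmem => ?_⟩,
    fun a b c d hab hbc hcd h => ⟨quadF_nonempty, ?_⟩,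
    fun δ ot i a b c d hδ hot h₁ h₃ h₄ hᵢ hi => ⟨quadF_nonempty, ?_⟩,
    fun e he => Or.inl he,
    fun a b c d hab hbc hcd h => (quadF_mem_spOfQuads_iff hab hbc hcd).mpr (hsp _ _ _ _ h),
    fun δ ot i a b c d hδ hot h₁ h₃ h₄ hᵢ hi => ?_⟩
  · have := four_le_card_of_mem_spOfQuads hmem
    omega
  · rw [quadF_mem_spOfQuads_iff hab hbc hcd]
    exact hsu _ _ _ _ h
  · have hcode : IsCodeQuad δ i a b c d := ⟨hδ, h₁, h₃, h₄, hᵢ⟩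
    obtain ⟨hab, hbc, hcd⟩ := hcode.lt
    rw [quadF_mem_spOfQuads_iff hab hbc hcd]
    exact hsu_code _ _ _ _ _ _ _ hot hcode hi
  · have hcode : IsCodeQuad δ i a b c d := ⟨hδ, h₁, h₃, h₄, hᵢ⟩
    obtain ⟨hab, hbc, hcd⟩ := hcode.lt
    rw [quadF_mem_spOfQuads_iff hab hbc hcd]
    exact hsp_code _ _ _ _ _ _ _ hot hcode hi

end SimplicityTable

section CountableOrdinals

theorem iSucc_o1 (n : ℕ) : ISucc (o1 n) (o1 (n + 1)) := by
  refine ⟨Subtype.coe_lt_coe.mp (by simp [o1]), fun k hk => ?_⟩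
  change ((n + 1 : ℕ) : Ordinal) ≤ k.1
  rw [Nat.cast_succ, ← Order.succ_eq_add_one, Order.succ_le_iff]
  exact hk

theorem iterSucc_o1 (n : ℕ) : IterSucc n (o1 0) (o1 n) := by
  induction n with
  | zero => rfl
  | succ n ih => exact ⟨o1 n, ih, iSucc_o1 n⟩

theorem iLimit_o1_zero : ILimit (o1 0) :=
  iLimit_of_isMin fun k _ => show ((0 : ℕ) : Ordinal) ≤ k.1 by simp

theorem iOdd_o1 {n : ℕ} (h : Odd n) : IOdd (o1 n) := ⟨o1 0, n, iLimit_o1_zero, h, iterSucc_o1 n⟩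

theorem iEven_o1 {n : ℕ} (h : Even n) : IEven (o1 n) := ⟨o1 0, n, iLimit_o1_zero, h, iterSucc_o1 n⟩

theorem o1_lt_o1 {m n : ℕ} (h : m < n) : o1 m < o1 n := (iterSucc_o1 m).lt_of_lt (iterSucc_o1 n) h

theorem not_isCodeQuad_o1_three {δ b c d : O1} {i : ℕ} : ¬ IsCodeQuad δ i (o1 3) b c d := by
  intro h
  obtain ⟨-, h13⟩ := IterSucc.unique_of_iLimit h.1 iLimit_o1_zero h.2.1 (iterSucc_o1 3)
  omega

def SpecialQuad (E : Ordinal → Set ℕ) (X : Set O1) (a b c d : O1) : Prop :=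
  SpecialColumnQuad a b c d ∨
  (∃ δ ot i, SegType δ ot ∧ IsCodeQuad δ i a b c d ∧ i ∉ E ot) ∨
  (a = o1 3 ∧ b = o1 5 ∧ c = o1 6 ∧ d ∉ X)

variable {E : Ordinal → Set ℕ} {X : Set O1} {a b c d : O1}

theorem not_specialQuad_of_suslinColumnQuad (h : SuslinColumnQuad a b c d) :
    ¬ SpecialQuad E X a b c d := by
  rintro (hsp | ⟨δ, ot, i, -, hcode, -⟩ | ⟨rfl, rfl, rfl, -⟩)
  · exact h.not_specialColumnQuad hsp
  · obtain ⟨ha, hb, hc⟩ := hcode.iOdd_iOdd_iEven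
    exact not_suslinColumnQuad_of_iOdd_iOdd_iEven ha hb hc h
  · exact not_suslinColumnQuad_of_iOdd_iOdd_iEven (iOdd_o1 (by decide)) (iOdd_o1 (by decide))
      (iEven_o1 (by decide)) h

theorem not_specialQuad_of_isCodeQuad {δ : O1} {ot : Ordinal} {i : ℕ} (hot : SegType δ ot)
    (hcode : IsCodeQuad δ i a b c d) (hi : i ∈ E ot) : ¬ SpecialQuad E X a b c d := by
  obtain ⟨ha, hb, hc⟩ := hcode.iOdd_iOdd_iEven
  rintro (hsp | ⟨δ', ot', i', hot', hcode', hi'⟩ | ⟨rfl, -⟩)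
  · exact not_specialColumnQuad_of_iOdd_iOdd ha hb hsp
  · obtain ⟨rfl, rfl⟩ := hcode.unique hcode'
    exact hi' (hot.unique hot' ▸ hi)
  · exact not_isCodeQuad_o1_three hcode

theorem specialQuad_three_five_six_iff {ζ : O1} :
    SpecialQuad E X (o1 3) (o1 5) (o1 6) ζ ↔ ζ ∉ X := by
  refine ⟨?_, fun h => Or.inr (Or.inr ⟨rfl, rfl, rfl, h⟩)⟩
  rintro (hsp | ⟨δ, ot, i, -, hcode, -⟩ | ⟨-, -, -, h⟩)
  · exact absurd hsp (not_specialColumnQuad_of_iOdd_iOdd (iOdd_o1 (by decide))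
      (iOdd_o1 (by decide)))
  · exact absurd hcode not_isCodeQuad_o1_three
  · exact h

end CountableOrdinals

theorem exists_simple_pattern_encoding_general (E : Ordinal → Set ℕ) (X : Set O1) :
    ∃ su sp : Set (Finset O1), IsSimplePatternI O1 E su sp ∧
      ∀ ζ : O1, o1 6 < ζ → (quadF (o1 3) (o1 5) (o1 6) ζ ∈ su ↔ ζ ∈ X) := by
  refine ⟨_, _, isSimplePatternI_spOfQuads (P := SpecialQuad E X)
    (fun _ _ _ _ => not_specialQuad_of_suslinColumnQuad)
    (fun _ _ _ _ _ _ _ => not_specialQuad_of_isCodeQuad)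
    (fun _ _ _ _ => Or.inl)
    (fun δ ot i _ _ _ _ hot hcode hi => Or.inr (Or.inl ⟨δ, ot, i, hot, hcode, hi⟩)),
    fun ζ hζ => ?_⟩
  rw [Set.mem_ofPred_eq, quadF_mem_spOfQuads_iff (o1_lt_o1 (by decide))
    (o1_lt_o1 (by decide)) hζ, specialQuad_three_five_six_iff, not_not]
  exact and_iff_right quadF_nonempty

/-- for every `X ⊆ ω₁` whose elements are all `> 6` there is a simple
pattern `(su, sp)` over ω₁ such that `{3,5,6,ζ} ∈ su ↔ ζ ∈ X` for all `6 < ζ < ω₁`. -/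
theorem exists_simple_pattern_encoding (E : Ordinal → Set ℕ) (hE : GoodCodes E)
    (X : Set O1) (hX : ∀ ζ ∈ X, o1 6 < ζ) :
    ∃ su sp : Set (Finset O1), IsSimplePatternI O1 E su sp ∧
      ∀ ζ : O1, o1 6 < ζ → (quadF (o1 3) (o1 5) (o1 6) ζ ∈ su ↔ ζ ∈ X) :=
  exists_simple_pattern_encoding_general E X
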